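/- arXiv:1106.2647 — 2 statements merged into one kernel-verified Lean document; each statement's English description precedes it below -/
import Mathlib

section
/- The axiom system AXun(S) is complete for the language Lprop(S) with respect to the class Tun(S): every formula of Lprop(S) that is valid with respect to Tun(S) is provable in AXun(S). -/
/-! ## Signatures -/

structure Signature where
  exo : Type
  endo : Type
  exoFin : Fintype exo
  endoFin : Fintype endo
  endoDec : DecidableEq endo
  exoRange : exo → Type
  range : endo → Type
  exoRangeFin : ∀ u, Fintype (exoRange u)
  rangeFin : ∀ X, Fintype (range X)
  exoRangeNe : ∀ u, Nonempty (exoRange u)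
  rangeNe : ∀ X, Nonempty (range X)

attribute [instance] Signature.exoFin Signature.endoFin Signature.endoDec
  Signature.exoRangeFin Signature.rangeFin Signature.exoRangeNe Signature.rangeNe

/-- A context: an assignment of values to the exogenous variables. -/
abbrev Signature.Ctx (S : Signature) : Type := ∀ u : S.exo, S.exoRange u

/-- An assignment of values to the endogenous variables. -/
abbrev Signature.Asgn (S : Signature) : Type := ∀ X : S.endo, S.range X

/-- An intervention `Y⃗ ← y⃗`: a partial assignment of values to (distinct)
endogenous variables. -/
abbrev Signature.Intervention (S : Signature) : Type := ∀ X : S.endo, Option (S.range X)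

/-- The primitive propositions Φ_S : propositions `X = x` for `X ∈ V`, `x ∈ R(X)`. -/
abbrev Signature.Atom (S : Signature) : Type := Σ X : S.endo, S.range X

/-! ## Counterfactual structures -/

/-- A counterfactual structure over the primitive propositions `Φ`:
a finite set of worlds, a valuation, and a ternary relation `R`,
where `R w u v` means `u ⪯_w v`. -/
structure CStruct (Φ : Type) where
  World : Type
  worldFin : Fintype World
  val : World → Φ → Prop
  R : World → World → World → Prop
  self_mem : ∀ w, ∃ v, R w w v
  refl_on : ∀ w u, (∃ v, R w u v) → R w u u
  trans_on : ∀ w u v x, (∃ y, R w u y) → (∃ y, R w v y) → (∃ y, R w x y) →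
    R w u v → R w v x → R w u x
  centered : ∀ w u, u ≠ w → (R w w u ∧ ¬ R w u w)

attribute [instance] CStruct.worldFin

namespace CStruct

variable {Φ : Type} (M : CStruct Φ)

/-- `u ∈ W_w` : `u ⪯_w v` for some `v`. -/
def inW (w u : M.World) : Prop := ∃ v, M.R w u v

/-- `u ≺_w v` : `u ⪯_w v` and not `v ⪯_w u`. -/
def lt (w u v : M.World) : Prop := M.R w u v ∧ ¬ M.R w v u

/-- The set of worlds in `W_w` satisfying `A` that are closest to `w`. -/
def closest (w : M.World) (A : M.World → Prop) : Set M.World :=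
  {v | M.inW w v ∧ A v ∧ ∀ v', A v' → ¬ M.lt w v' v}

/-- `(M,w) ⊨ A > B` : every closest world to `w` satisfying `A` satisfies `B`. -/
def cfSat (w : M.World) (A B : M.World → Prop) : Prop :=
  ∀ v ∈ M.closest w A, B v

/-- Membership in `M⁺`: each `≺_w` is a strict total order on `W_w`. -/
def totalOrd : Prop :=
  ∀ w u v, M.inW w u → M.inW w v → u ≠ v → M.lt w u v ∨ M.lt w v u

end CStruct

/-! ## Acceptable and full structures over Φ_S -/

/-- At every world, for each variable `X` exactly one proposition `X = x` is true. -/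
def Acceptable (S : Signature) (M : CStruct S.Atom) : Prop :=
  ∀ (w : M.World) (X : S.endo), ∃! x : S.range X, M.val w ⟨X, x⟩

/-- Every assignment of values to the endogenous variables is realized at some
world of `W_w`, for every world `w`. -/
def Full (S : Signature) (M : CStruct S.Atom) : Prop :=
  ∀ (w : M.World) (a : S.Asgn), ∃ v, M.inW w v ∧ ∀ X : S.endo, M.val v ⟨X, a X⟩

/-- The antecedent `Y⃗ = y⃗` (a conjunction of atoms) of the counterfactual
corresponding to the intervention `g`, as a predicate on worlds. -/
def intAnte (S : Signature) (M : CStruct S.Atom) (g : S.Intervention) :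
    M.World → Prop :=
  fun v => ∀ (Y : S.endo) (y : S.range Y), g Y = some y → M.val v ⟨Y, y⟩

/-- `(M,w) ⊨ [Y⃗ ← y⃗](X = x)`, read as the counterfactual
`(Y₁ = y₁ ∧ ... ∧ Y_k = y_k) > (X = x)`. -/
def satBasic (S : Signature) (M : CStruct S.Atom) (w : M.World)
    (g : S.Intervention) (X : S.endo) (x : S.range X) : Prop :=
  M.cfSat w (intAnte S M g) (fun v => M.val v ⟨X, x⟩)

/-- Recursive counterfactual structures `Mrec(Φ_S)`: full acceptable structures in
`M⁺` such that for each world there is a strict total order `≺` on the endogenous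
variables such that if `W' ≺ Y` then setting `Y` (in addition to `X⃗`) does not
change the value of `W'` at the closest world. -/
def MRec (S : Signature) (M : CStruct S.Atom) : Prop :=
  Acceptable S M ∧ Full S M ∧ M.totalOrd ∧
  ∀ w : M.World, ∃ vlt : S.endo → S.endo → Prop, IsStrictTotalOrder S.endo vlt ∧
    ∀ W' Y : S.endo, vlt W' Y →
      ∀ g : S.Intervention, g W' = none → g Y = none →
        ∀ (y : S.range Y) (w' : S.range W'),
          (satBasic S M w (Function.update g Y (some y)) W' w' ↔ satBasic S M w g W' w')

/-! ## Causal models -/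

/-- A causal model over `S`: for each endogenous variable `X`, a structural
equation `F_X` mapping the values of all the other variables to a value of `X`. -/
structure CausalModel (S : Signature) where
  F : ∀ X : S.endo, S.Ctx → (∀ Y : {Y : S.endo // Y ≠ X}, S.range Y.1) → S.range X

namespace CausalModel

variable {S : Signature}

/-- `a` is a solution of the equations of `T_{g}` in context `u`. -/
def isSolution (T : CausalModel S) (g : S.Intervention) (u : S.Ctx) (a : S.Asgn) : Prop :=
  ∀ X : S.endo,
    (∀ x : S.range X, g X = some x → a X = x) ∧
    (g X = none → a X = T.F X u (fun Y => a Y.1))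

/-- `T` is recursive (acyclic): membership in `Trec(S)`. -/
def Recursive (T : CausalModel S) : Prop :=
  ∃ vlt : S.endo → S.endo → Prop, IsStrictTotalOrder S.endo vlt ∧
    ∀ X Y : S.endo, vlt X Y →
      ∀ (u : S.Ctx) (a a' : ∀ Z : {Z : S.endo // Z ≠ X}, S.range Z.1),
        (∀ Z : {Z : S.endo // Z ≠ X}, Z.1 ≠ Y → a Z = a' Z) →
        T.F X u a = T.F X u a'

/-- Membership in `Tun(S)`: all the equations of every `T_{X⃗ ← x⃗}` have a
unique solution in every context. -/
def UniqueSolutions (T : CausalModel S) : Prop :=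
  ∀ (g : S.Intervention) (u : S.Ctx), ∃! a : S.Asgn, T.isSolution g u a

end CausalModel

/-! ## The language Lprop(S) -/

/-- `Lprop(S)`: Boolean combinations of basic formulas `[Y⃗ ← y⃗](X = x)`. -/
inductive LProp (S : Signature) : Type
  | basic (g : S.Intervention) (X : S.endo) (x : S.range X) : LProp S
  | neg : LProp S → LProp S
  | and : LProp S → LProp S → LProp S

/-- Satisfaction of `Lprop(S)` formulas in a causal model, relative to a context. -/
def CausalModel.sat {S : Signature} (T : CausalModel S) (u : S.Ctx) : LProp S → Prop
  | .basic g X x => ∀ a : S.Asgn, T.isSolution g u a → a X = x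
  | .neg φ => ¬ CausalModel.sat T u φ
  | .and φ ψ => CausalModel.sat T u φ ∧ CausalModel.sat T u ψ

/-- Satisfaction of `Lprop(S)` formulas in a counterfactual structure over `Φ_S`. -/
def satL {S : Signature} (M : CStruct S.Atom) (w : M.World) : LProp S → Prop
  | .basic g X x => satBasic S M w g X x
  | .neg φ => ¬ satL M w φ
  | .and φ ψ => satL M w φ ∧ satL M w ψ

namespace LProp

variable {S : Signature}

def imp (φ ψ : LProp S) : LProp S := .neg (.and φ (.neg ψ))

def or (φ ψ : LProp S) : LProp S := .neg (.and (.neg φ) (.neg ψ))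

/-- Boolean evaluation of a formula treating the basic formulas as atoms. -/
def evalB (v : LProp S → Prop) : LProp S → Prop
  | .neg φ => ¬ evalB v φ
  | .and φ ψ => evalB v φ ∧ evalB v ψ
  | .basic g X x => v (.basic g X x)

/-- Instances of propositional tautologies in `Lprop(S)`. -/
def Taut (φ : LProp S) : Prop := ∀ v : LProp S → Prop, evalB v φ

/-- Disjunction of a nonempty list of formulas. -/
def bigOrNe : LProp S → List (LProp S) → LProp S
  | φ, [] => φ
  | φ, ψ :: l => or φ (bigOrNe ψ l)

end LProp

/-- The proof system AXun(S): C0 (propositional tautologies), C1 (equality),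
C2 (definiteness), C3 (composition), C4 (effectiveness), C5 (reversibility),
with modus ponens. -/
inductive AXunProv (S : Signature) : LProp S → Prop
  | taut {φ : LProp S} : LProp.Taut φ → AXunProv S φ
  | c1 (g : S.Intervention) (X : S.endo) (x x' : S.range X) (h : x ≠ x') :
      AXunProv S (LProp.imp (.basic g X x) (.neg (.basic g X x')))
  | c2 (g : S.Intervention) (X : S.endo) (x0 : S.range X) (l : List (S.range X))
      (h : x0 :: l = (Finset.univ : Finset (S.range X)).toList) :
      AXunProv S (LProp.bigOrNe (.basic g X x0) (l.map (fun x => LProp.basic g X x)))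
  | c3 (g : S.Intervention) (W : S.endo) (w : S.range W) (Y : S.endo) (y : S.range Y)
      (hW : g W = none) :
      AXunProv S (LProp.imp (.and (.basic g W w) (.basic g Y y))
        (.basic (Function.update g W (some w)) Y y))
  | c4 (g : S.Intervention) (X : S.endo) (x : S.range X) (h : g X = some x) :
      AXunProv S (.basic g X x)
  | c5 (g : S.Intervention) (W : S.endo) (w : S.range W) (Y : S.endo) (y : S.range Y)
      (hne : Y ≠ W) (hW : g W = none) (hY : g Y = none) :
      AXunProv S (LProp.imp
        (.and (.basic (Function.update g W (some w)) Y y)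
              (.basic (Function.update g Y (some y)) W w))
        (.basic g Y y))
  | mp {φ ψ : LProp S} : AXunProv S (LProp.imp φ ψ) → AXunProv S φ → AXunProv S ψ

/-! ## The language Lex(S) -/

/-- Boolean combinations of atoms `X = x`. -/
inductive BForm (S : Signature) : Type
  | atom (X : S.endo) (x : S.range X) : BForm S
  | neg : BForm S → BForm S
  | and : BForm S → BForm S → BForm S

def BForm.holds {S : Signature} (a : S.Asgn) : BForm S → Prop
  | .atom X x => a X = x
  | .neg φ => ¬ BForm.holds a φ
  | .and φ ψ => BForm.holds a φ ∧ BForm.holds a ψ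

/-- `Lex(S)`: Boolean combinations of basic formulas `[Y⃗ ← y⃗]ψ`, where `ψ` is a
Boolean combination of atoms. -/
inductive LEx (S : Signature) : Type
  | basic (g : S.Intervention) (ψ : BForm S) : LEx S
  | neg : LEx S → LEx S
  | and : LEx S → LEx S → LEx S

/-- Satisfaction of `Lex(S)` formulas in a causal model, relative to a context. -/
def CausalModel.satEx {S : Signature} (T : CausalModel S) (u : S.Ctx) : LEx S → Prop
  | .basic g ψ => ∀ a : S.Asgn, T.isSolution g u a → ψ.holds a
  | .neg φ => ¬ CausalModel.satEx T u φ
  | .and φ ψ => CausalModel.satEx T u φ ∧ CausalModel.satEx T u ψ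

/-! ## The counterfactual language L^C(Φ) and the system AX -/

/-- The language `L^C(Φ)`: primitive propositions closed under `∧`, `¬` and the
counterfactual connective `>` (`cf`). -/
inductive CForm (Φ : Type) : Type
  | atom : Φ → CForm Φ
  | fls : CForm Φ
  | neg : CForm Φ → CForm Φ
  | and : CForm Φ → CForm Φ → CForm Φ
  | cf : CForm Φ → CForm Φ → CForm Φ

namespace CForm

variable {Φ : Type}

def tr : CForm Φ := neg fls

def or (φ ψ : CForm Φ) : CForm Φ := neg (and (neg φ) (neg ψ))

def imp (φ ψ : CForm Φ) : CForm Φ := or (neg φ) ψ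

def iff (φ ψ : CForm Φ) : CForm Φ := and (imp φ ψ) (imp ψ φ)

/-- Boolean evaluation treating atoms and counterfactuals as atomic. -/
def evalB (v : CForm Φ → Prop) : CForm Φ → Prop
  | fls => False
  | neg φ => ¬ evalB v φ
  | and φ ψ => evalB v φ ∧ evalB v ψ
  | atom p => v (atom p)
  | cf φ ψ => v (cf φ ψ)

/-- Instances of propositional tautologies in `L^C(Φ)`. -/
def Taut (φ : CForm Φ) : Prop := ∀ v : CForm Φ → Prop, evalB v φ

def bigAnd : List (CForm Φ) → CForm Φ
  | [] => tr
  | [φ] => φ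
  | φ :: l => and φ (bigAnd l)

def bigOr : List (CForm Φ) → CForm Φ
  | [] => fls
  | [φ] => φ
  | φ :: l => or φ (bigOr l)

end CForm

/-- Provability in the system AX (axioms A0–A6, rules MP, RA1, RA2), augmented
with an arbitrary set `extra` of additional axioms. -/
inductive AXProv (Φ : Type) (extra : CForm Φ → Prop) : CForm Φ → Prop
  | taut {φ} : CForm.Taut φ → AXProv Φ extra φ
  | ax {φ} : extra φ → AXProv Φ extra φ
  | a1 (φ) : AXProv Φ extra (CForm.cf φ φ)
  | a2 (φ ψ1 ψ2) : AXProv Φ extra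
      (CForm.imp (CForm.and (CForm.cf φ ψ1) (CForm.cf φ ψ2)) (CForm.cf φ (CForm.and ψ1 ψ2)))
  | a3 (φ1 φ2 ψ) : AXProv Φ extra
      (CForm.imp (CForm.and (CForm.cf φ1 φ2) (CForm.cf φ1 ψ)) (CForm.cf (CForm.and φ1 φ2) ψ))
  | a4 (φ1 φ2 ψ) : AXProv Φ extra
      (CForm.imp (CForm.and (CForm.cf φ1 ψ) (CForm.cf φ2 ψ)) (CForm.cf (CForm.or φ1 φ2) ψ))
  | a5 : AXProv Φ extra (CForm.neg (CForm.cf CForm.tr CForm.fls))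
  | a6 (φ ψ) : AXProv Φ extra (CForm.imp φ (CForm.iff ψ (CForm.cf φ ψ)))
  | mp {φ ψ} : AXProv Φ extra (CForm.imp φ ψ) → AXProv Φ extra φ → AXProv Φ extra ψ
  | ra1 {φ φ' ψ} : AXProv Φ extra (CForm.iff φ φ') →
      AXProv Φ extra (CForm.imp (CForm.cf φ ψ) (CForm.cf φ' ψ))
  | ra2 {ψ ψ' φ} : AXProv Φ extra (CForm.imp ψ ψ') →
      AXProv Φ extra (CForm.imp (CForm.cf φ ψ) (CForm.cf φ ψ'))

/-- The axiom scheme A7. -/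
def A7Scheme (Φ : Type) : CForm Φ → Prop := fun θ =>
  ∃ φ ψ1 ψ2 : CForm Φ, θ = CForm.imp (CForm.cf φ (CForm.or ψ1 ψ2))
    (CForm.or (CForm.cf φ ψ1) (CForm.cf φ ψ2))

/-- Satisfaction of `L^C(Φ)` formulas in a counterfactual structure. -/
def CStruct.satC {Φ : Type} (M : CStruct Φ) : M.World → CForm Φ → Prop
  | w, .atom p => M.val w p
  | _, .fls => False
  | w, .neg φ => ¬ CStruct.satC M w φ
  | w, .and φ ψ => CStruct.satC M w φ ∧ CStruct.satC M w ψ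
  | w, .cf φ ψ => ∀ v ∈ M.closest w (fun u => CStruct.satC M u φ), CStruct.satC M v ψ

/-! ## The signature with three binary endogenous variables -/

/-- The signature with endogenous variables `V = {X1, X2, X3}` (as `Fin 3`), each
with range `{0, 1}` (as `Fin 2`), and an arbitrary exogenous part. -/
abbrev S3 (E : Type) (eF : Fintype E) (er : E → Type)
    (erF : ∀ e, Fintype (er e)) (erN : ∀ e, Nonempty (er e)) : Signature :=
  { exo := E
    endo := Fin 3
    exoFin := eF
    endoFin := inferInstance
    endoDec := inferInstance
    exoRange := er
    range := fun _ => Fin 2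
    exoRangeFin := erF
    rangeFin := fun _ => inferInstance
    exoRangeNe := erN
    rangeNe := fun _ => ⟨0⟩ }

/-- The intervention `Xi ← 1`. -/
def gI {E : Type} {eF : Fintype E} {er : E → Type}
    {erF : ∀ e, Fintype (er e)} {erN : ∀ e, Nonempty (er e)}
    (i : Fin 3) : (S3 E eF er erF erN).Intervention :=
  fun j => if j = i then some (1 : Fin 2) else none

/-- The intervention `Xi ← 1; Xj ← 1`. -/
def gII {E : Type} {eF : Fintype E} {er : E → Type}
    {erF : ∀ e, Fintype (er e)} {erN : ∀ e, Nonempty (er e)}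
    (i j : Fin 3) : (S3 E eF er erF erN).Intervention :=
  fun k => if k = i ∨ k = j then some (1 : Fin 2) else none

/-- The formula φ : `[X1←1](X2 = 1) ∧ [X1←1](X3 = 0) ∧ [X2←1](X3 = 1) ∧
[X2←1](X1 = 0) ∧ [X3←1](X1 = 1) ∧ [X3←1](X2 = 0)`. -/
def phi3 {E : Type} {eF : Fintype E} {er : E → Type}
    {erF : ∀ e, Fintype (er e)} {erN : ∀ e, Nonempty (er e)} :
    LProp (S3 E eF er erF erN) :=
  .and (.basic (gI 0) 1 1) <| .and (.basic (gI 0) 2 0) <| .and (.basic (gI 1) 2 1) <|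
    .and (.basic (gI 1) 0 0) <| .and (.basic (gI 2) 0 1) (.basic (gI 2) 1 0)

/-!
By propositional reasoning over the finitely many basic formulas, it suffices to realize every
valuation `v` in which all theorems of AXun(S) are true by a model of Tun(S). Equality and
definiteness make `v` pick a value `sol g X` for each intervention `g` and variable `X`, and
C3–C5 become composition, effectiveness and reversibility of `sol`. Let the equation for `X`
return `sol g X` for the intervention `g` fixing all other variables. Composition makes `sol g`
a solution of the equations under `g`; any solution `a` is `sol g` by induction on the number of
variables `g` leaves free: fixing one more of them to its value in `a` keeps `a` a solution, and
reversibility transfers the value back.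
-/

namespace LProp

variable {S : Signature}

@[simp] lemma evalB_imp (v : LProp S → Prop) (φ ψ : LProp S) :
    evalB v (imp φ ψ) ↔ (evalB v φ → evalB v ψ) := by
  simp only [imp, evalB]
  tauto

@[simp] lemma evalB_or (v : LProp S → Prop) (φ ψ : LProp S) :
    evalB v (or φ ψ) ↔ evalB v φ ∨ evalB v ψ := by
  simp only [LProp.or, evalB]
  tauto

lemma evalB_bigOrNe (v : LProp S → Prop) (φ : LProp S) (l : List (LProp S)) :
    evalB v (bigOrNe φ l) ↔ ∃ ψ ∈ φ :: l, evalB v ψ := by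
  induction l generalizing φ with
  | nil => simp [bigOrNe]
  | cons ψ l ih => simp [bigOrNe, ih]

lemma evalB_foldr_imp (v : LProp S → Prop) (φ : LProp S) (l : List (LProp S)) :
    evalB v (l.foldr imp φ) ↔ ((∀ ψ ∈ l, evalB v ψ) → evalB v φ) := by
  induction l with
  | nil => simp
  | cons ψ l ih => simp [ih, and_imp]

def ofBasic (s : S.Intervention → ∀ X : S.endo, S.range X → Prop) : LProp S → Prop
  | basic g X x => s g X x
  | _ => False

lemma evalB_ofBasic (v : LProp S → Prop) (φ : LProp S) :
    evalB (ofBasic fun g X x => v (basic g X x)) φ ↔ evalB v φ := by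
  induction φ with
  | basic => rfl
  | neg φ ih => exact not_congr ih
  | and φ ψ ih₁ ih₂ => exact and_congr ih₁ ih₂

variable {P : LProp S → Prop}

lemma of_foldr_imp (hmp : ∀ {φ ψ}, P (imp φ ψ) → P φ → P ψ) {φ : LProp S}
    {l : List (LProp S)} (hl : ∀ ψ ∈ l, P ψ) (h : P (l.foldr imp φ)) : P φ := by
  induction l with
  | nil => exact h
  | cons ψ l ih =>
    exact ih (fun χ hχ => hl χ (List.mem_cons_of_mem _ hχ)) (hmp h (hl ψ List.mem_cons_self))

/-- Each of the finitely many valuations of the basic formulas either satisfies `P`, and then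
`φ`, or is refuted by a formula of `P`; for the list `l` of these refuting formulas,
`l₁ → ⋯ → lₙ → φ` is a tautology. -/
theorem complete_of_taut_of_mp (htaut : ∀ {φ}, Taut φ → P φ)
    (hmp : ∀ {φ ψ}, P (imp φ ψ) → P φ → P ψ) {φ : LProp S}
    (h : ∀ v, (∀ ψ, P ψ → evalB v ψ) → evalB v φ) : P φ := by
  classical
  have refute : ∀ s, ∃ ψ, P ψ ∧ (evalB (ofBasic s) ψ → evalB (ofBasic s) φ) := by
    intro s
    by_cases hs : ∃ ψ, P ψ ∧ ¬ evalB (ofBasic s) ψ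
    · obtain ⟨ψ, hψ, hfalse⟩ := hs
      exact ⟨ψ, hψ, fun htrue => absurd htrue hfalse⟩
    · refine ⟨imp φ φ, htaut fun v => (evalB_imp v φ φ).2 id, fun _ => h _ fun ψ hψ => ?_⟩
      exact by_contra fun hfalse => hs ⟨ψ, hψ, hfalse⟩
  choose c hcP hc using refute
  let l := (Finset.univ : Finset (S.Intervention → ∀ X : S.endo, S.range X → Prop)).toList.map c
  refine of_foldr_imp hmp (l := l) (by simpa [l] using hcP) (htaut fun v => ?_)
  rw [evalB_foldr_imp]
  intro hl
  have := hc fun g X x => v (basic g X x)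
  rw [evalB_ofBasic, evalB_ofBasic] at this
  exact this (hl _ (List.mem_map_of_mem (Finset.mem_toList.2 (Finset.mem_univ _))))

end LProp

open Function

namespace Signature

variable {S : Signature}

def unset (g : S.Intervention) : Finset S.endo :=
  Finset.univ.filter fun Y => g Y = none

lemma card_unset_update_lt {g : S.Intervention} {W : S.endo} (hW : g W = none)
    (w : S.range W) : (unset (update g W (some w))).card < (unset g).card := by
  refine Finset.card_lt_card ⟨fun Y hY => ?_, fun hsub => ?_⟩
  · simp only [unset, Finset.mem_filter, Finset.mem_univ, true_and] at hY ⊢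
    rcases eq_or_ne Y W with rfl | hne
    · simp at hY
    · rwa [update_of_ne hne] at hY
  · have := hsub (Finset.mem_filter.2 ⟨Finset.mem_univ W, hW⟩)
    simp [unset] at this

def allBut (X : S.endo) (b : ∀ Y : {Y : S.endo // Y ≠ X}, S.range Y.1) :
    S.Intervention :=
  fun Y => if h : Y = X then none else some (b ⟨Y, h⟩)

/-- C4, C3 and C5, read as properties of the map sending `g` to the unique solution of
`T_g`. -/
structure IsSolutionMap (sol : S.Intervention → S.Asgn) : Prop where
  effective : ∀ g X x, g X = some x → sol g X = x
  composition : ∀ g W, g W = none → sol (update g W (some (sol g W))) = sol g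
  reversibility : ∀ g W (w : S.range W) Y (y : S.range Y), Y ≠ W → g W = none → g Y = none →
    sol (update g W (some w)) Y = y → sol (update g Y (some y)) W = w → sol g Y = y

namespace IsSolutionMap

variable {sol : S.Intervention → S.Asgn} (hs : IsSolutionMap sol)
include hs

theorem eq_of_refines (g g' : S.Intervention)
    (hg' : ∀ Y, g' Y = g Y ∨ g' Y = some (sol g Y)) : sol g' = sol g := by
  by_cases hgg' : g' = g
  · rw [hgg']
  obtain ⟨W, hW⟩ := not_forall.1 fun h => hgg' (funext h)
  have hgW : g W = none := by
    rcases hgWv : g W with _ | w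
    · rfl
    · rcases hg' W with h | h
      · exact absurd h hW
      · rw [h, hgWv, hs.effective g W w hgWv] at hW
        exact absurd rfl hW
  have hg₁ := hs.composition g W hgW
  have : sol g' = sol (update g W (some (sol g W))) := by
    refine eq_of_refines _ g' fun Y => ?_
    rw [hg₁]
    rcases eq_or_ne Y W with rfl | hne
    · exact .inr ((hg' Y).resolve_left hW)
    · rw [update_of_ne hne]
      exact hg' Y
  rw [this, hg₁]
termination_by (unset g).card
decreasing_by exact card_unset_update_lt hgW _

end IsSolutionMap

end Signature

namespace CausalModel

open Signature

variable {S : Signature}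

lemma isSolution_update {T : CausalModel S} {g : S.Intervention} {u : S.Ctx} {a : S.Asgn}
    (ha : T.isSolution g u a) (W : S.endo) : T.isSolution (update g W (some (a W))) u a := by
  intro X
  rcases eq_or_ne X W with rfl | hne
  · simp
  · simpa only [update_of_ne hne] using ha X

def ofSolutionMap (sol : S.Intervention → S.Asgn) : CausalModel S :=
  ⟨fun X _ b => sol (allBut X b) X⟩

end CausalModel

namespace Signature.IsSolutionMap

open CausalModel

variable {S : Signature} {sol : S.Intervention → S.Asgn} (hs : IsSolutionMap sol)
include hs

theorem isSolution_ofSolutionMap (g : S.Intervention) (u : S.Ctx) :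
    (ofSolutionMap sol).isSolution g u (sol g) := by
  refine fun X => ⟨hs.effective g X, fun hX => ?_⟩
  refine (congrFun (hs.eq_of_refines g _ fun Y => ?_) X).symm
  by_cases hY : Y = X
  · subst hY
    simp [allBut, hX]
  · simp [allBut, hY]

theorem eq_of_isSolution_ofSolutionMap {g : S.Intervention} {u : S.Ctx} {a : S.Asgn}
    (ha : (ofSolutionMap sol).isSolution g u a) : a = sol g := by
  funext X
  rcases hX : g X with _ | x
  · by_cases hW : ∃ W, W ≠ X ∧ g W = none
    · obtain ⟨W, hWX, hgW⟩ := hW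
      have haW := eq_of_isSolution_ofSolutionMap (isSolution_update ha W)
      have haX := eq_of_isSolution_ofSolutionMap (isSolution_update ha X)
      exact (hs.reversibility g W (a W) X (a X) hWX.symm hgW hX
        (congrFun haW X).symm (congrFun haX W).symm).symm
    · have hall : allBut X (fun Y => a Y.1) = g := by
        funext Y
        by_cases hYX : Y = X
        · subst hYX
          simp [allBut, hX]
        · rcases hgY : g Y with _ | y
          · exact absurd ⟨Y, hYX, hgY⟩ hW
          · simp [allBut, hYX, (ha Y).1 y hgY]
      rw [(ha X).2 hX]
      exact congrFun (congrArg sol hall) X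
  · rw [(ha X).1 x hX, hs.effective g X x hX]
termination_by (unset g).card
decreasing_by
  all_goals exact card_unset_update_lt (by assumption) _

theorem isSolution_ofSolutionMap_iff {g : S.Intervention} {u : S.Ctx} {a : S.Asgn} :
    (ofSolutionMap sol).isSolution g u a ↔ a = sol g :=
  ⟨hs.eq_of_isSolution_ofSolutionMap, fun h => h ▸ hs.isSolution_ofSolutionMap g u⟩

theorem uniqueSolutions_ofSolutionMap : (ofSolutionMap sol).UniqueSolutions :=
  fun g u => ⟨sol g, hs.isSolution_ofSolutionMap g u, fun _ => hs.isSolution_ofSolutionMap_iff.1⟩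

theorem sat_ofSolutionMap_iff {v : LProp S → Prop}
    (hv : ∀ g X x, v (.basic g X x) ↔ sol g X = x) (u : S.Ctx) (φ : LProp S) :
    (ofSolutionMap sol).sat u φ ↔ LProp.evalB v φ := by
  induction φ with
  | basic g X x =>
    simp only [sat, LProp.evalB, hv, hs.isSolution_ofSolutionMap_iff, forall_eq]
  | neg φ ih => exact not_congr ih
  | and φ ψ ih₁ ih₂ => exact and_congr ih₁ ih₂

end Signature.IsSolutionMap

def IsAXunValuation {S : Signature} (v : LProp S → Prop) : Prop :=
  ∀ φ, AXunProv S φ → LProp.evalB v φ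

theorem AXunProv.of_forall_isAXunValuation {S : Signature} {φ : LProp S}
    (h : ∀ v : LProp S → Prop, IsAXunValuation v → LProp.evalB v φ) : AXunProv S φ :=
  LProp.complete_of_taut_of_mp AXunProv.taut AXunProv.mp h

namespace IsAXunValuation

open LProp Signature

variable {S : Signature} {v : LProp S → Prop} (hv : IsAXunValuation v)
include hv

theorem existsUnique_basic (g : S.Intervention) (X : S.endo) : ∃! x, v (.basic g X x) := by
  obtain ⟨x₀, l, hl⟩ := List.exists_cons_of_ne_nil
    (Finset.toList_eq_nil.not.2 (Finset.univ_nonempty (α := S.range X)).ne_empty)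
  have hdef := hv _ (AXunProv.c2 g X x₀ l hl.symm)
  simp only [evalB_bigOrNe, ← List.map_cons, List.mem_map] at hdef
  obtain ⟨_, ⟨x, -, rfl⟩, hx⟩ := hdef
  refine ⟨x, hx, fun x' hx' => by_contra fun hne => ?_⟩
  have := hv _ (AXunProv.c1 g X x' x hne)
  simp only [evalB_imp, evalB] at this
  exact this hx' hx

noncomputable def sol (g : S.Intervention) : S.Asgn :=
  fun X => (hv.existsUnique_basic g X).exists.choose

theorem basic_iff {g : S.Intervention} {X : S.endo} {x : S.range X} :
    v (.basic g X x) ↔ hv.sol g X = x := by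
  have hsol := (hv.existsUnique_basic g X).exists.choose_spec
  exact ⟨fun h => ((hv.existsUnique_basic g X).unique h hsol).symm, fun h => h ▸ hsol⟩

theorem isSolutionMap_sol : IsSolutionMap hv.sol where
  effective g X x hx := hv.basic_iff.1 (hv _ (AXunProv.c4 g X x hx))
  composition g W hW := funext fun Y => by
    have := hv _ (AXunProv.c3 g W (hv.sol g W) Y (hv.sol g Y) hW)
    simpa only [evalB_imp, evalB, hv.basic_iff, and_self, forall_const] using this
  reversibility g W w Y y hne hW hY h₁ h₂ := by
    have := hv _ (AXunProv.c5 g W w Y y hne hW hY)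
    simp only [evalB_imp, evalB, hv.basic_iff] at this
    exact this ⟨h₁, h₂⟩

end IsAXunValuation

/-- AXun(S) is complete for `Lprop(S)` with respect to `Tun(S)`:
every valid formula is provable. -/
theorem stmt18 (S : Signature) (φ : LProp S)
    (h : ∀ T : CausalModel S, T.UniqueSolutions → ∀ u : S.Ctx, T.sat u φ) :
    AXunProv S φ := by
  refine AXunProv.of_forall_isAXunValuation fun v hv => ?_
  have hsol := hv.isSolutionMap_sol
  let u : S.Ctx := fun _ => Classical.arbitrary _
  exact (hsol.sat_ofSolutionMap_iff (fun _ _ _ => hv.basic_iff) u φ).1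
    (h _ hsol.uniqueSolutions_ofSolutionMap u)
end

section
/- For every finite set Φ of primitive propositions: (i) the axiom system AX is sound and complete for the language L^C(Φ) with respect to the class M(Φ) of all counterfactual structures over Φ, and (ii) the axiom system AX+ (AX together with A7) is sound and complete for L^C(Φ) with respect to the class M+(Φ) of counterfactual structures in which each ≺_w is a strict total order on W_w. -/
/-!
Soundness is checked axiom by axiom: A3 uses that in a finite structure every `φ₁`-world lies
above a closest one, and A7 that distinct closest worlds are incomparable, hence do not exist when
the orders are total.

For completeness let `Γ` be the subformulas of an unprovable `φ`. A maximal consistent set `T`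
selects from each set `A` of valuations of `Γ` those `g` with `¬(⋁A > ¬ĝ) ∈ T`, and
`⋁A > ⋁B ∈ T` iff the selection from `A` lies in `B`. A1–A6 make selection behave like taking
the closest worlds: it lies in `A`; it is the valuation of `T` alone when that is in `A`; for
`A ⊆ B` the selection from `B` meets `A` inside the selection from `A`; and if the selection
from `B` lies in `A ⊆ B` the two selections agree. So a canonical model only has to realise,
around each world, every selection as the valuations of the closest worlds; the truth lemma is
then a routine induction. With A7 every selection has at most one element, and around `x` the
valuation that `x` selects from a pair comes first, which is a total order. Without A7 the worlds
around `x` are the states `(G, g)` with `g` selected from `G`, where `(G', g')` comes before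
`(G, g)` when `G ⊂ G'` and `g' ∉ G`: a state `(G, g)` with `g ∈ D` not selected from `D` is beaten
by a state over `G ∪ D`.
-/

namespace CForm

variable {Φ : Type}

@[simp] lemma evalB_fls (v : CForm Φ → Prop) : evalB v fls ↔ False := Iff.rfl
@[simp] lemma evalB_neg (v : CForm Φ → Prop) (φ : CForm Φ) :
    evalB v (neg φ) ↔ ¬ evalB v φ := Iff.rfl
@[simp] lemma evalB_and (v : CForm Φ → Prop) (φ ψ : CForm Φ) :
    evalB v (and φ ψ) ↔ evalB v φ ∧ evalB v ψ := Iff.rfl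
@[simp] lemma evalB_tr (v : CForm Φ → Prop) : evalB v tr := fun h => h
@[simp] lemma evalB_or (v : CForm Φ → Prop) (φ ψ : CForm Φ) :
    evalB v (or φ ψ) ↔ evalB v φ ∨ evalB v ψ := by
  simp only [or, evalB_neg, evalB_and]; tauto
@[simp] lemma evalB_imp (v : CForm Φ → Prop) (φ ψ : CForm Φ) :
    evalB v (imp φ ψ) ↔ (evalB v φ → evalB v ψ) := by
  simp only [imp, evalB_or, evalB_neg]; tauto
@[simp] lemma evalB_iff (v : CForm Φ → Prop) (φ ψ : CForm Φ) :
    evalB v (iff φ ψ) ↔ (evalB v φ ↔ evalB v ψ) := by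
  simp only [iff, evalB_and, evalB_imp]; tauto

@[simp] lemma evalB_bigAnd (v : CForm Φ → Prop) :
    ∀ l : List (CForm Φ), evalB v (bigAnd l) ↔ ∀ χ ∈ l, evalB v χ
  | [] => by simp [bigAnd]
  | [φ] => by simp [bigAnd]
  | φ :: ψ :: l => by simp [bigAnd, evalB_bigAnd v (ψ :: l)]

@[simp] lemma evalB_bigOr (v : CForm Φ → Prop) :
    ∀ l : List (CForm Φ), evalB v (bigOr l) ↔ ∃ χ ∈ l, evalB v χ
  | [] => by simp [bigOr]
  | [φ] => by simp [bigOr]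
  | φ :: ψ :: l => by simp [bigOr, evalB_bigOr v (ψ :: l)]

open Classical in
noncomputable def subformulas : CForm Φ → Finset (CForm Φ)
  | atom p => {atom p}
  | fls => {fls}
  | neg φ => insert (neg φ) φ.subformulas
  | and φ ψ => insert (and φ ψ) (φ.subformulas ∪ ψ.subformulas)
  | cf φ ψ => insert (cf φ ψ) (φ.subformulas ∪ ψ.subformulas)

lemma mem_subformulas_self (φ : CForm Φ) : φ ∈ φ.subformulas := by
  cases φ <;> simp [subformulas]

end CForm

namespace CStruct

variable {Φ : Type} {M : CStruct Φ}

@[simp] lemma satC_atom (w : M.World) (p : Φ) : M.satC w (.atom p) ↔ M.val w p := Iff.rfl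
@[simp] lemma satC_fls (w : M.World) : M.satC w .fls ↔ False := Iff.rfl
@[simp] lemma satC_neg (w : M.World) (φ : CForm Φ) :
    M.satC w (.neg φ) ↔ ¬ M.satC w φ := Iff.rfl
@[simp] lemma satC_and (w : M.World) (φ ψ : CForm Φ) :
    M.satC w (.and φ ψ) ↔ M.satC w φ ∧ M.satC w ψ := Iff.rfl
lemma satC_cf (w : M.World) (φ ψ : CForm Φ) :
    M.satC w (.cf φ ψ) ↔ ∀ v ∈ M.closest w (M.satC · φ), M.satC v ψ := Iff.rfl

lemma satC_iff_evalB (w : M.World) (φ : CForm Φ) : M.satC w φ ↔ φ.evalB (M.satC w) := by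
  induction φ with
  | atom p => rfl
  | fls => rfl
  | neg φ ih => exact not_congr ih
  | and φ ψ ih₁ ih₂ => exact and_congr ih₁ ih₂
  | cf φ ψ => rfl

@[simp] lemma satC_or (w : M.World) (φ ψ : CForm Φ) :
    M.satC w (.or φ ψ) ↔ M.satC w φ ∨ M.satC w ψ := by
  simp [satC_iff_evalB w]
@[simp] lemma satC_imp (w : M.World) (φ ψ : CForm Φ) :
    M.satC w (.imp φ ψ) ↔ (M.satC w φ → M.satC w ψ) := by
  simp [satC_iff_evalB w]
@[simp] lemma satC_iff (w : M.World) (φ ψ : CForm Φ) :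
    M.satC w (.iff φ ψ) ↔ (M.satC w φ ↔ M.satC w ψ) := by
  simp [satC_iff_evalB w]
@[simp] lemma satC_tr (w : M.World) : M.satC w .tr := by
  simp [satC_iff_evalB w]

lemma inW_self (w : M.World) : M.inW w w := M.self_mem w

lemma inW_of_lt {w u v : M.World} (h : M.lt w u v) : M.inW w u := ⟨v, h.1⟩

lemma lt_self_of_ne {w u : M.World} (h : u ≠ w) : M.lt w w u := M.centered w u h

lemma not_lt_self (w u : M.World) : ¬ M.lt w u w := by
  rintro ⟨hR, hnR⟩
  obtain rfl | hne := eq_or_ne u w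
  · exact hnR hR
  · exact (M.centered w u hne).2 hR

lemma lt_trans {w a b c : M.World} (hc : M.inW w c) (hab : M.lt w a b) (hbc : M.lt w b c) :
    M.lt w a c := by
  have ha := inW_of_lt hab
  have hb := inW_of_lt hbc
  exact ⟨M.trans_on w a b c ha hb hc hab.1 hbc.1,
    fun hca => hbc.2 (M.trans_on w c a b hc ha hb hca hab.1)⟩

lemma closest_congr (w : M.World) {A B : M.World → Prop}
    (h : ∀ y, M.inW w y → (A y ↔ B y)) :
    M.closest w A = M.closest w B := by
  ext v
  exact ⟨fun ⟨hv, hA, hmin⟩ => ⟨hv, (h v hv).1 hA,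
      fun v' hB hlt => hmin v' ((h v' (inW_of_lt hlt)).2 hB) hlt⟩,
    fun ⟨hv, hB, hmin⟩ => ⟨hv, (h v hv).2 hB,
      fun v' hA hlt => hmin v' ((h v' (inW_of_lt hlt)).1 hA) hlt⟩⟩

lemma closest_eq_singleton_self (w : M.World) {A : M.World → Prop} (hA : A w) :
    M.closest w A = {w} := by
  ext v
  refine ⟨fun ⟨_, _, hmin⟩ => by_contra fun hne => hmin w hA (lt_self_of_ne hne), ?_⟩
  rintro rfl
  exact ⟨inW_self v, hA, fun v' _ => not_lt_self v v'⟩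

lemma exists_mem_closest_le (w : M.World) {A : M.World → Prop} {x : M.World} (hx : M.inW w x)
    (hAx : A x) : ∃ m ∈ M.closest w A, M.R w m x := by
  let r : M.World → M.World → Prop := fun a b => M.lt w a b ∧ M.inW w b
  have : IsTrans M.World r := ⟨fun _ _ _ hab hbc => ⟨lt_trans hbc.2 hab.1 hbc.1, hbc.2⟩⟩
  have : Std.Irrefl r := ⟨fun _ h => h.1.2 h.1.1⟩
  obtain ⟨m, ⟨hmW, hmA, hmx⟩, hmin⟩ := (Finite.wellFounded_of_trans_of_irrefl r).has_min
    {y | M.inW w y ∧ A y ∧ M.R w y x} ⟨x, hx, hAx, M.refl_on w x hx⟩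
  refine ⟨m, ⟨hmW, hmA, fun y hAy hlt => hmin y ⟨inW_of_lt hlt, hAy, ?_⟩ ⟨hlt, hmW⟩⟩,
    hmx⟩
  exact M.trans_on w y m x (inW_of_lt hlt) hmW hx hlt.1 hmx

lemma satC_A1 (w : M.World) (φ : CForm Φ) : M.satC w (.cf φ φ) :=
  fun _ hv => hv.2.1

lemma satC_A2 (w : M.World) (φ ψ₁ ψ₂ : CForm Φ) :
    M.satC w (.imp (.and (.cf φ ψ₁) (.cf φ ψ₂)) (.cf φ (.and ψ₁ ψ₂))) := by
  simp only [satC_imp, satC_and]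
  exact fun ⟨h₁, h₂⟩ v hv => ⟨h₁ v hv, h₂ v hv⟩

lemma satC_A3 (w : M.World) (φ₁ φ₂ ψ : CForm Φ) :
    M.satC w (.imp (.and (.cf φ₁ φ₂) (.cf φ₁ ψ)) (.cf (.and φ₁ φ₂) ψ)) := by
  simp only [satC_imp, satC_and]
  rintro ⟨h₁, h₂⟩ v ⟨hvW, ⟨hv₁, hv₂⟩, hmin⟩
  refine h₂ v ⟨hvW, hv₁, fun v' hv' hlt => ?_⟩
  -- a closest `φ₁`-world below `v'` satisfies `φ₂` and so contradicts the minimality of `v`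
  obtain ⟨m, hm, hmv'⟩ := exists_mem_closest_le w (A := (M.satC · φ₁)) (inW_of_lt hlt) hv'
  have hmW : M.inW w m := hm.1
  refine hmin m ⟨hm.2.1, h₁ m hm⟩ ⟨M.trans_on w m v' v hmW (inW_of_lt hlt) hvW hmv' hlt.1,
    fun hvm => hlt.2 (M.trans_on w v m v' hvW hmW (inW_of_lt hlt) hvm hmv')⟩

lemma satC_A4 (w : M.World) (φ₁ φ₂ ψ : CForm Φ) :
    M.satC w (.imp (.and (.cf φ₁ ψ) (.cf φ₂ ψ)) (.cf (.or φ₁ φ₂) ψ)) := by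
  simp only [satC_imp, satC_and]
  rintro ⟨h₁, h₂⟩ v ⟨hvW, hv, hmin⟩
  rcases (satC_or v φ₁ φ₂).1 hv with hv | hv
  · exact h₁ v ⟨hvW, hv, fun v' hv' => hmin v' ((satC_or v' φ₁ φ₂).2 (.inl hv'))⟩
  · exact h₂ v ⟨hvW, hv, fun v' hv' => hmin v' ((satC_or v' φ₁ φ₂).2 (.inr hv'))⟩

lemma satC_A6 (w : M.World) (φ ψ : CForm Φ) : M.satC w (.imp φ (.iff ψ (.cf φ ψ))) := by
  simp only [satC_imp, satC_iff, satC_cf]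
  intro hφ
  rw [closest_eq_singleton_self w hφ]
  simp

lemma satC_A5 (w : M.World) : M.satC w (.neg (.cf .tr .fls)) := by
  simpa using satC_A6 w .tr .fls

lemma satC_A7 (hM : M.totalOrd) (w : M.World) (φ ψ₁ ψ₂ : CForm Φ) :
    M.satC w (.imp (.cf φ (.or ψ₁ ψ₂)) (.or (.cf φ ψ₁) (.cf φ ψ₂))) := by
  simp only [satC_imp, satC_or, satC_cf]
  intro h
  by_contra! ⟨⟨v₁, hv₁, hn₁⟩, ⟨v₂, hv₂, hn₂⟩⟩
  obtain rfl | hne := eq_or_ne v₁ v₂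
  · exact (h v₁ hv₁).elim hn₁ hn₂
  · rcases hM w v₁ v₂ hv₁.1 hv₂.1 hne with hlt | hlt
    · exact hv₂.2.2 v₁ hv₁.2.1 hlt
    · exact hv₁.2.2 v₂ hv₂.2.1 hlt

section OfStrictOrders

variable {α : Type} [Fintype α]

abbrev ofStrictOrders (val : α → Φ → Prop) (V : α → α → Prop)
    (r : α → α → α → Prop) (hV : ∀ x, ¬ V x x)
    (htrans : ∀ x a b c, V x a → V x b → V x c → r x a b → r x b c → r x a c) :
    CStruct Φ where
  World := α
  worldFin := ‹_›
  val := val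
  R x a b := a = x ∨ (V x a ∧ V x b ∧ (a = b ∨ r x a b))
  self_mem x := ⟨x, .inl rfl⟩
  refl_on := by
    rintro x a ⟨b, rfl | ⟨ha, -, -⟩⟩
    · exact .inl rfl
    · exact .inr ⟨ha, ha, .inl rfl⟩
  trans_on := by
    rintro x a b c - - - (rfl | ⟨ha, hb, hab⟩) hbc
    · exact .inl rfl
    rcases hbc with rfl | ⟨-, hc, hbc⟩
    · exact absurd hb (hV _)
    refine .inr ⟨ha, hc, ?_⟩
    rcases hab with rfl | hab
    · exact hbc
    rcases hbc with rfl | hbc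
    · exact .inr hab
    · exact .inr (htrans x a b c ha hb hc hab hbc)
  centered x u hu := ⟨.inl rfl, by rintro (rfl | ⟨-, hx, -⟩); exacts [hu rfl, hV x hx]⟩

variable {val : α → Φ → Prop} {V : α → α → Prop} {r : α → α → α → Prop}
  {hV : ∀ x, ¬ V x x}
  {htrans : ∀ x a b c, V x a → V x b → V x c → r x a b → r x b c → r x a c}

lemma inW_ofStrictOrders {x y : α} :
    (ofStrictOrders val V r hV htrans).inW x y ↔ y = x ∨ V x y := by
  refine ⟨fun ⟨_, h⟩ => h.imp_right fun h => h.1, ?_⟩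
  rintro (rfl | hy)
  exacts [⟨y, .inl rfl⟩, ⟨y, .inr ⟨hy, hy, .inl rfl⟩⟩]

lemma lt_ofStrictOrders (hirr : ∀ x a, ¬ r x a a) {x a b : α} (ha : V x a) (hb : V x b) :
    (ofStrictOrders val V r hV htrans).lt x a b ↔ r x a b := by
  have hne : ∀ {c}, V x c → c ≠ x := fun hc h => hV x (h ▸ hc)
  refine ⟨fun ⟨hab, hba⟩ => ?_, fun hab => ⟨.inr ⟨ha, hb, .inr hab⟩, ?_⟩⟩
  · rcases hab with h | ⟨-, -, rfl | hab⟩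
    exacts [absurd h (hne ha), absurd (.inr ⟨ha, ha, .inl rfl⟩) hba, hab]
  · rintro (h | ⟨-, -, rfl | hba⟩)
    exacts [hne hb h, hirr x b hab, hirr x a (htrans x a b a ha hb ha hab hba)]

lemma closest_ofStrictOrders (hirr : ∀ x a, ¬ r x a a) {x : α} {A : α → Prop} (hA : ¬ A x) :
    (ofStrictOrders val V r hV htrans).closest x A =
      {y | V x y ∧ A y ∧ ∀ y', V x y' → A y' → ¬ r x y' y} := by
  have hV' : ∀ {y}, (ofStrictOrders val V r hV htrans).inW x y → A y → V x y := fun hy hAy =>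
    (inW_ofStrictOrders.1 hy).resolve_left fun h => hA (h ▸ hAy)
  ext y
  refine ⟨fun ⟨hyW, hAy, hmin⟩ =>
      ⟨hV' hyW hAy, hAy, fun y' hy' hAy' hr => hmin y' hAy' ?_⟩,
    fun ⟨hy, hAy, hmin⟩ => ⟨inW_ofStrictOrders.2 (.inr hy), hAy, fun y' hAy' hlt => ?_⟩⟩
  · exact (lt_ofStrictOrders hirr hy' (hV' hyW hAy)).2 hr
  · have hy' := hV' (inW_of_lt hlt) hAy'
    exact hmin y' hy' hAy' ((lt_ofStrictOrders hirr hy' hy).1 hlt)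

lemma totalOrd_ofStrictOrders (hirr : ∀ x a, ¬ r x a a)
    (htot : ∀ x a b, V x a → V x b → a ≠ b → r x a b ∨ r x b a) :
    (ofStrictOrders val V r hV htrans).totalOrd := by
  intro x a b ha hb hab
  rcases inW_ofStrictOrders.1 ha with rfl | ha
  · exact .inl (lt_self_of_ne hab.symm)
  rcases inW_ofStrictOrders.1 hb with rfl | hb
  · exact .inr (lt_self_of_ne hab)
  rw [lt_ofStrictOrders hirr ha hb, lt_ofStrictOrders hirr hb ha]
  exact htot x a b ha hb hab

end OfStrictOrders

end CStruct

namespace AXProv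

variable {Φ : Type} {ex : CForm Φ → Prop}

theorem sound {C : CStruct Φ → Prop} (hex : ∀ M, C M → ∀ w θ, ex θ → M.satC w θ)
    {φ : CForm Φ} (h : AXProv Φ ex φ) : ∀ M, C M → ∀ w : M.World, M.satC w φ := by
  induction h with
  | taut ht => exact fun M _ w => (CStruct.satC_iff_evalB w _).2 (ht _)
  | ax hθ => exact fun M hM w => hex M hM w _ hθ
  | a1 => exact fun M _ w => CStruct.satC_A1 w _
  | a2 => exact fun M _ w => CStruct.satC_A2 w _ _ _
  | a3 => exact fun M _ w => CStruct.satC_A3 w _ _ _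
  | a4 => exact fun M _ w => CStruct.satC_A4 w _ _ _
  | a5 => exact fun M _ w => CStruct.satC_A5 w
  | a6 => exact fun M _ w => CStruct.satC_A6 w _ _
  | mp _ _ ih₁ ih₂ =>
    exact fun M hM w => (CStruct.satC_imp w _ _).1 (ih₁ M hM w) (ih₂ M hM w)
  | ra1 _ ih =>
    intro M hM w
    rw [CStruct.satC_imp, CStruct.satC_cf, CStruct.satC_cf,
      CStruct.closest_congr w fun y _ => (CStruct.satC_iff y _ _).1 (ih M hM y)]
    exact id
  | ra2 _ ih =>
    exact fun M hM w => (CStruct.satC_imp w _ _).2 fun h v hv =>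
      (CStruct.satC_imp v _ _).1 (ih M hM v) (h v hv)

lemma of_forall_evalB {l : List (CForm Φ)} {φ : CForm Φ} (hl : ∀ χ ∈ l, AXProv Φ ex χ)
    (h : ∀ v, (∀ χ ∈ l, CForm.evalB v χ) → CForm.evalB v φ) : AXProv Φ ex φ := by
  induction l generalizing φ with
  | nil => exact taut fun v => h v (by simp)
  | cons χ l ih =>
    refine mp (ih (fun ψ hψ => hl ψ (List.mem_cons_of_mem _ hψ)) fun v hv => ?_)
      (hl χ List.mem_cons_self)
    rw [CForm.evalB_imp]
    exact fun hχ => h v (List.forall_mem_cons.2 ⟨hχ, hv⟩)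

lemma cf_imp_cf {α α' β β' : CForm Φ} (hα : ∀ v, CForm.evalB v α ↔ CForm.evalB v α')
    (hβ : ∀ v, CForm.evalB v β → CForm.evalB v β') :
    AXProv Φ ex (.imp (.cf α β) (.cf α' β')) :=
  of_forall_evalB (l := [.imp (.cf α β) (.cf α' β), .imp (.cf α' β) (.cf α' β')])
    (by simpa using ⟨ra1 (taut fun v => by simpa using hα v),
      ra2 (taut fun v => by simpa using hβ v)⟩)
    (by simp only [List.mem_cons, List.not_mem_nil, or_false, forall_eq_or_imp, forall_eq,
      CForm.evalB_imp]; tauto)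

def Consistent (ex : CForm Φ → Prop) (S : Set (CForm Φ)) : Prop :=
  ∀ l : List (CForm Φ), (∀ χ ∈ l, χ ∈ S) → ¬ AXProv Φ ex (.neg (.bigAnd l))

def MaxConsistent (ex : CForm Φ → Prop) (T : Set (CForm Φ)) : Prop :=
  Maximal (Consistent ex) T

lemma consistent_neg_singleton {φ : CForm Φ} (h : ¬ AXProv Φ ex φ) : Consistent ex {.neg φ} :=
  fun l hl hl' => h <| of_forall_evalB (l := [.neg (.bigAnd l)]) (by simpa using hl')
    fun v hv => by_contra fun hφ => by
      obtain ⟨χ, hχ, hnχ⟩ := (by simpa using hv : ∃ χ ∈ l, ¬ χ.evalB v)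
      exact hnχ ((hl χ hχ) ▸ hφ)

lemma Consistent.exists_maxConsistent_superset {S : Set (CForm Φ)} (h : Consistent ex S) :
    ∃ T, S ⊆ T ∧ MaxConsistent ex T := by
  refine zorn_subset_nonempty {U | Consistent ex U} (fun c hc hchain hne =>
    ⟨⋃₀ c, fun l hl => ?_, fun _ => Set.subset_sUnion_of_mem⟩) S h
  obtain ⟨t, htc, hlt⟩ := hchain.directedOn.exists_mem_subset_of_finite_of_subset_sUnion hne
    (s := {χ | χ ∈ l}) l.finite_toSet hl
  exact hc htc l hlt

namespace MaxConsistent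

variable {T : Set (CForm Φ)} (hT : MaxConsistent ex T)
include hT

lemma exists_neg_of_notMem {φ : CForm Φ} (hφ : φ ∉ T) :
    ∃ l : List (CForm Φ), (∀ χ ∈ l, χ ∈ T) ∧
      AXProv Φ ex (.neg (.and φ (.bigAnd l))) := by
  classical
  have : ¬ Consistent ex (insert φ T) :=
    fun hcon => hφ (hT.2 hcon (Set.subset_insert φ T) (Set.mem_insert φ T))
  simp only [Consistent, not_forall, not_not] at this
  obtain ⟨l, hl, hprv⟩ := this
  refine ⟨l.filter (· ≠ φ), fun χ hχ => ?_,
    of_forall_evalB (l := [_]) (by simpa using hprv) fun v hv => ?_⟩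
  · simp only [List.mem_filter, decide_eq_true_eq] at hχ
    exact (hl χ hχ.1).resolve_left hχ.2
  · simp only [List.mem_singleton, forall_eq, CForm.evalB_neg, CForm.evalB_bigAnd] at hv
    simp only [CForm.evalB_neg, CForm.evalB_and, CForm.evalB_bigAnd, List.mem_filter,
      decide_eq_true_eq, not_and]
    intro hφv hrest
    exact hv fun χ hχ => if h : χ = φ then h ▸ hφv else hrest χ ⟨hχ, h⟩

lemma mem_of_prv_imp {l : List (CForm Φ)} {φ : CForm Φ} (hl : ∀ χ ∈ l, χ ∈ T)
    (h : AXProv Φ ex (.imp (.bigAnd l) φ)) : φ ∈ T := by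
  by_contra hφ
  obtain ⟨l', hl', h'⟩ := hT.exists_neg_of_notMem hφ
  refine hT.1 (l' ++ l) (by simpa using fun χ hχ => hχ.elim (hl' χ) (hl χ)) ?_
  exact of_forall_evalB (l := [_, _]) (by simpa using ⟨h, h'⟩) fun v hv => by
    simp only [List.mem_cons, List.not_mem_nil, or_false, forall_eq_or_imp, forall_eq] at hv
    simp only [CForm.evalB_imp, CForm.evalB_bigAnd, CForm.evalB_neg, CForm.evalB_and,
      List.mem_append] at hv ⊢
    exact fun hall =>
      hv.2 ⟨hv.1 fun χ hχ => hall χ (.inr hχ), fun χ hχ => hall χ (.inl hχ)⟩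

lemma mem_of_prv {φ : CForm Φ} (h : AXProv Φ ex φ) : φ ∈ T :=
  hT.mem_of_prv_imp (l := []) (by simp) (of_forall_evalB (l := [φ]) (by simpa using h)
    (by simp))

lemma neg_mem_iff (φ : CForm Φ) : .neg φ ∈ T ↔ φ ∉ T := by
  refine ⟨fun hn hφ => hT.1 [φ, .neg φ] (by simp [hφ, hn]) (.taut fun v => by simp),
    fun hφ => ?_⟩
  obtain ⟨l, hl, h⟩ := hT.exists_neg_of_notMem hφ
  exact hT.mem_of_prv_imp hl (of_forall_evalB (l := [_]) (by simpa using h)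
    fun v hv => by
      simp only [List.mem_singleton, forall_eq, CForm.evalB_neg, CForm.evalB_and,
        CForm.evalB_bigAnd, CForm.evalB_imp] at hv ⊢
      exact fun hall hφv => hv ⟨hφv, hall⟩)

lemma and_mem_iff (φ ψ : CForm Φ) : .and φ ψ ∈ T ↔ φ ∈ T ∧ ψ ∈ T := by
  refine ⟨fun h => ⟨?_, ?_⟩, fun h => ?_⟩
  · exact hT.mem_of_prv_imp (l := [.and φ ψ]) (by simpa using h)
      (.taut fun v => by simp [CForm.bigAnd]; tauto)
  · exact hT.mem_of_prv_imp (l := [.and φ ψ]) (by simpa using h)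
      (.taut fun v => by simp [CForm.bigAnd])
  · exact hT.mem_of_prv_imp (l := [φ, ψ]) (by simpa using h)
      (.taut fun v => by simp [CForm.bigAnd])

lemma fls_notMem : CForm.fls ∉ T :=
  fun h => hT.1 [.fls] (by simpa using h) (.taut fun v => by simp [CForm.bigAnd])

lemma evalB_mem_iff (φ : CForm Φ) : φ.evalB (· ∈ T) ↔ φ ∈ T := by
  induction φ with
  | atom p => rfl
  | fls => simpa using hT.fls_notMem
  | neg φ ih => rw [CForm.evalB_neg, ih, hT.neg_mem_iff]
  | and φ ψ ih₁ ih₂ => rw [CForm.evalB_and, ih₁, ih₂, hT.and_mem_iff]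
  | cf φ ψ => rfl

lemma mem_of_imp {φ ψ : CForm Φ} (h : AXProv Φ ex (.imp φ ψ)) (hφ : φ ∈ T) :
    ψ ∈ T := by
  rw [← hT.evalB_mem_iff] at hφ ⊢
  exact (CForm.evalB_imp _ φ ψ).1 ((hT.evalB_mem_iff _).2 (hT.mem_of_prv h)) hφ

lemma mem_of_imp₂ {φ ψ χ : CForm Φ} (h : AXProv Φ ex (.imp (.and φ ψ) χ)) (hφ : φ ∈ T)
    (hψ : ψ ∈ T) : χ ∈ T :=
  hT.mem_of_imp h ((hT.and_mem_iff φ ψ).2 ⟨hφ, hψ⟩)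

lemma or_mem_iff (φ ψ : CForm Φ) : .or φ ψ ∈ T ↔ φ ∈ T ∨ ψ ∈ T := by
  rw [← hT.evalB_mem_iff, CForm.evalB_or, hT.evalB_mem_iff, hT.evalB_mem_iff]

end MaxConsistent

end AXProv

noncomputable section

open Classical AXProv

namespace Canonical

variable {Φ : Type} {ex : CForm Φ → Prop}

variable (Γ : Finset (CForm Φ))

abbrev Val : Type := Γ → Bool

def valOf (v : CForm Φ → Prop) : Val Γ := fun ψ => decide (ψ.1.evalB v)

def charForm (g : Val Γ) : CForm Φ :=
  .bigAnd ((Finset.univ : Finset Γ).toList.map fun ψ => if g ψ then ψ.1 else .neg ψ.1)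

def disjForm (A : Finset (Val Γ)) : CForm Φ := .bigOr (A.toList.map (charForm Γ))

variable {Γ}

lemma valOf_apply_eq_true_iff (v : CForm Φ → Prop) (ψ : Γ) :
    valOf Γ v ψ = true ↔ ψ.1.evalB v :=
  decide_eq_true_iff

lemma evalB_charForm (v : CForm Φ → Prop) (g : Val Γ) :
    (charForm Γ g).evalB v ↔ valOf Γ v = g := by
  simp only [charForm, CForm.evalB_bigAnd, List.mem_map, Finset.mem_toList, Finset.mem_univ,
    true_and, forall_exists_index, forall_apply_eq_imp_iff, funext_iff, valOf]
  refine forall_congr' fun ψ => ?_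
  cases g ψ <;> simp

lemma evalB_disjForm (v : CForm Φ → Prop) (A : Finset (Val Γ)) :
    (disjForm Γ A).evalB v ↔ valOf Γ v ∈ A := by
  simp [disjForm, evalB_charForm]

def Cond (T : Set (CForm Φ)) (A B : Finset (Val Γ)) : Prop :=
  .cf (disjForm Γ A) (disjForm Γ B) ∈ T

/-- `g` is selected from `A` unless `T` contains `disjForm A > ¬ charForm g` (up to equivalence):
the canonical stand-in for the valuations of the closest `disjForm A`-worlds. -/
def select (T : Set (CForm Φ)) (A : Finset (Val Γ)) : Finset (Val Γ) :=
  Finset.univ.filter fun g => ¬ Cond T A {g}ᶜ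

lemma mem_select {T : Set (CForm Φ)} {A : Finset (Val Γ)} {g : Val Γ} :
    g ∈ select T A ↔ ¬ Cond T A {g}ᶜ := by
  simp [select]

section

variable {T : Set (CForm Φ)} (hT : MaxConsistent ex T)
include hT

lemma valOf_mem_apply_eq_true_iff (ψ : Γ) : valOf Γ (· ∈ T) ψ = true ↔ ψ.1 ∈ T := by
  rw [valOf_apply_eq_true_iff, hT.evalB_mem_iff]

lemma charForm_mem_iff (g : Val Γ) : charForm Γ g ∈ T ↔ valOf Γ (· ∈ T) = g := by
  rw [← hT.evalB_mem_iff, evalB_charForm]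

lemma disjForm_mem_iff (A : Finset (Val Γ)) :
    disjForm Γ A ∈ T ↔ valOf Γ (· ∈ T) ∈ A := by
  rw [← hT.evalB_mem_iff, evalB_disjForm]

lemma cf_mem_of_cf_mem {α α' β β' : CForm Φ} (hα : ∀ v, α.evalB v ↔ α'.evalB v)
    (hβ : ∀ v, β.evalB v → β'.evalB v) (h : .cf α β ∈ T) : .cf α' β' ∈ T :=
  hT.mem_of_imp (AXProv.cf_imp_cf hα hβ) h

lemma cond_of_prv {A B : Finset (Val Γ)}
    (h : AXProv Φ ex (.imp (disjForm Γ A) (disjForm Γ B))) : Cond T A B :=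
  hT.mem_of_prv (.mp (.ra2 h) (.a1 _))

lemma cond_of_subset {A B : Finset (Val Γ)} (h : A ⊆ B) : Cond T A B :=
  cond_of_prv hT (.taut fun v => by simpa [evalB_disjForm] using @h _)

lemma Cond.mono {A B B' : Finset (Val Γ)} (h : Cond T A B) (hB : B ⊆ B') : Cond T A B' :=
  cf_mem_of_cf_mem hT (fun _ => .rfl) (fun v => by simpa [evalB_disjForm] using @hB _) h

lemma Cond.inter {A B C : Finset (Val Γ)} (hB : Cond T A B) (hC : Cond T A C) :
    Cond T A (B ∩ C) :=
  cf_mem_of_cf_mem hT (fun _ => .rfl) (fun v => by simp [evalB_disjForm])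
    (hT.mem_of_imp₂ (.a2 _ _ _) hB hC)

lemma Cond.inter_left {A B C : Finset (Val Γ)} (hB : Cond T A B) (hC : Cond T A C) :
    Cond T (A ∩ B) C :=
  cf_mem_of_cf_mem hT (fun v => by simp [evalB_disjForm]) (fun _ => id)
    (hT.mem_of_imp₂ (.a3 _ _ _) hB hC)

lemma Cond.union_left {A B C : Finset (Val Γ)} (hA : Cond T A C) (hB : Cond T B C) :
    Cond T (A ∪ B) C :=
  cf_mem_of_cf_mem hT (fun v => by simp [evalB_disjForm]) (fun _ => id)
    (hT.mem_of_imp₂ (.a4 _ _ _) hA hB)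

lemma cond_iff_of_mem {A B : Finset (Val Γ)} (hA : valOf Γ (· ∈ T) ∈ A) :
    Cond T A B ↔ valOf Γ (· ∈ T) ∈ B := by
  have h := hT.mem_of_imp (.a6 _ (disjForm Γ B)) ((disjForm_mem_iff hT A).2 hA)
  rw [← hT.evalB_mem_iff, CForm.evalB_iff, hT.evalB_mem_iff, hT.evalB_mem_iff,
    disjForm_mem_iff hT] at h
  exact h.symm

lemma Cond.or_of_union (hA7 : ∀ θ, A7Scheme Φ θ → AXProv Φ ex θ) {A B C : Finset (Val Γ)}
    (h : Cond T A (B ∪ C)) : Cond T A B ∨ Cond T A C := by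
  have h' := cf_mem_of_cf_mem hT (fun _ => .rfl)
    (β' := .or (disjForm Γ B) (disjForm Γ C)) (fun v => by simp [evalB_disjForm]) h
  exact (hT.or_mem_iff _ _).1 (hT.mem_of_imp (hA7 _ ⟨_, _, _, rfl⟩) h')

lemma cond_select (A : Finset (Val Γ)) : Cond T A (select T A) := by
  suffices ∀ S : Finset (Val Γ), (∀ g ∈ S, Cond T A {g}ᶜ) → Cond T A Sᶜ by
    simpa using this (select T A)ᶜ (by simp [mem_select])
  intro S
  induction S using Finset.induction_on with
  | empty => exact fun _ => cond_of_subset hT (by simp)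
  | insert g S _ ih =>
    intro hS
    have : (insert g S)ᶜ = Sᶜ ∩ {g}ᶜ := by ext; simp [and_comm]
    rw [this]
    exact Cond.inter hT (ih fun h hh => hS h (Finset.mem_insert_of_mem hh))
      (hS g (Finset.mem_insert_self g S))

lemma cond_iff_select_subset {A B : Finset (Val Γ)} : Cond T A B ↔ select T A ⊆ B := by
  refine ⟨fun h g hg => by_contra fun hgB => mem_select.1 hg (Cond.mono hT h ?_),
    Cond.mono hT (cond_select hT A)⟩
  intro x hx
  rw [Finset.mem_compl, Finset.mem_singleton]
  rintro rfl
  exact hgB hx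

lemma select_subset (A : Finset (Val Γ)) : select T A ⊆ A :=
  (cond_iff_select_subset hT).1 (cond_of_subset hT le_rfl)

lemma mem_select_of_subset {A B : Finset (Val Γ)} (hAB : A ⊆ B) {g : Val Γ}
    (hg : g ∈ select T B) (hgA : g ∈ A) : g ∈ select T A := by
  have h := Cond.union_left hT (Cond.mono hT (cond_select hT A) Finset.subset_union_left)
    (cond_of_subset hT (Finset.subset_union_right (s₁ := select T A) (s₂ := B \ A)))
  rw [Finset.union_sdiff_of_subset hAB, cond_iff_select_subset hT] at h
  exact (Finset.mem_union.1 (h hg)).resolve_right fun hg' => (Finset.mem_sdiff.1 hg').2 hgA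

lemma select_eq_of_select_subset {A B : Finset (Val Γ)} (hBA : select T B ⊆ A) (hAB : A ⊆ B) :
    select T A = select T B := by
  refine subset_antisymm ?_ fun g hg => mem_select_of_subset hT hAB hg (hBA hg)
  have h := Cond.inter_left hT ((cond_iff_select_subset hT).2 hBA) (cond_select hT B)
  rwa [Finset.inter_eq_right.2 hAB, cond_iff_select_subset hT] at h

lemma select_nonempty_of_subset {A B : Finset (Val Γ)} (hAB : A ⊆ B)
    (hA : (select T A).Nonempty) : (select T B).Nonempty := by
  rw [Finset.nonempty_iff_ne_empty] at hA ⊢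
  intro hB
  exact hA (by rw [select_eq_of_select_subset hT (by simp [hB]) hAB, hB])

lemma select_eq_singleton_of_mem {A : Finset (Val Γ)} (hA : valOf Γ (· ∈ T) ∈ A) :
    select T A = {valOf Γ (· ∈ T)} :=
  Finset.Subset.antisymm
    ((cond_iff_select_subset hT).1 ((cond_iff_of_mem hT hA).2 (Finset.mem_singleton_self _)))
    (Finset.singleton_subset_iff.2 ((cond_iff_of_mem hT hA).1 (cond_select hT A)))

lemma eq_of_mem_select (hA7 : ∀ θ, A7Scheme Φ θ → AXProv Φ ex θ) {A : Finset (Val Γ)}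
    {g h : Val Γ} (hg : g ∈ select T A) (hh : h ∈ select T A) : g = h := by
  by_contra hne
  have : Cond T A ({g}ᶜ ∪ {h}ᶜ) := cond_of_subset hT fun x _ => by
    simp only [Finset.mem_union, Finset.mem_compl, Finset.mem_singleton]
    by_contra! hx
    exact hne (hx.1.symm.trans hx.2)
  exact (Cond.or_of_union hT hA7 this).elim (mem_select.1 hg) (mem_select.1 hh)

lemma exists_mem_select_union_notMem {G D : Finset (Val Γ)} {g : Val Γ}
    (hgG : g ∈ select T G) (hgD : g ∈ D) (hg : g ∉ select T D) :
    ∃ x ∈ select T (G ∪ D), x ∉ G := by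
  by_contra! h
  have hGD := select_eq_of_select_subset hT h Finset.subset_union_left
  exact hg (mem_select_of_subset hT Finset.subset_union_right (hGD ▸ hgG) hgD)

lemma exists_maxConsistent_of_mem_select {A : Finset (Val Γ)} {g : Val Γ}
    (hg : g ∈ select T A) : ∃ T', MaxConsistent ex T' ∧ valOf Γ (· ∈ T') = g := by
  have hcon : Consistent ex {charForm Γ g} := fun l hl hprv => mem_select.1 hg <|
    cond_of_prv hT <| of_forall_evalB (l := [_]) (by simpa using hprv) fun v hv => by
      simp only [List.mem_singleton, forall_eq, CForm.evalB_neg, CForm.evalB_bigAnd] at hv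
      simp only [CForm.evalB_imp, evalB_disjForm, Finset.mem_compl, Finset.mem_singleton]
      refine fun _ hvg => hv fun χ hχ => ?_
      rw [hl χ hχ, evalB_charForm, hvg]
  obtain ⟨T', hsub, hT'⟩ := hcon.exists_maxConsistent_superset
  exact ⟨T', hT', (charForm_mem_iff hT' g).1 (hsub rfl)⟩

end

variable (ex Γ) in
abbrev Point : Type := {g : Val Γ // ∃ T, MaxConsistent ex T ∧ valOf Γ (· ∈ T) = g}

def mcsOf (p : Point ex Γ) : Set (CForm Φ) := p.2.choose

lemma maxConsistent_mcsOf (p : Point ex Γ) : MaxConsistent ex (mcsOf p) := p.2.choose_spec.1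

lemma valOf_mcsOf (p : Point ex Γ) : valOf Γ (· ∈ mcsOf p) = p.1 := p.2.choose_spec.2

lemma mem_mcsOf_iff (p : Point ex Γ) (ψ : Γ) : ψ.1 ∈ mcsOf p ↔ p.1 ψ = true := by
  rw [← valOf_mem_apply_eq_true_iff (maxConsistent_mcsOf p), valOf_mcsOf]

def pointOfMemSelect {x : Point ex Γ} {D : Finset (Val Γ)} {g : Val Γ}
    (hg : g ∈ select (mcsOf x) D) : Point ex Γ :=
  ⟨g, exists_maxConsistent_of_mem_select (maxConsistent_mcsOf x) hg⟩

@[simp] lemma coe_pointOfMemSelect {x : Point ex Γ} {D : Finset (Val Γ)} {g : Val Γ}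
    (hg : g ∈ select (mcsOf x) D) : (pointOfMemSelect hg).1 = g := rfl

lemma exists_point_notMem {φ : CForm Φ} (h : ¬ AXProv Φ ex φ) (hφ : φ ∈ Γ) :
    ∃ p : Point ex Γ, φ ∉ mcsOf p := by
  obtain ⟨T, hnT, hT⟩ := (consistent_neg_singleton h).exists_maxConsistent_superset
  refine ⟨⟨valOf Γ (· ∈ T), T, hT, rfl⟩, fun hp => ?_⟩
  rw [mem_mcsOf_iff _ ⟨φ, hφ⟩, valOf_mem_apply_eq_true_iff hT] at hp
  exact (hT.neg_mem_iff φ).1 (hnT rfl) hp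

def truthSet (ψ : Γ) : Finset (Val Γ) := Finset.univ.filter (· ψ = true)

lemma cond_truthSet_iff {T : Set (CForm Φ)} (hT : MaxConsistent ex T) (α β : Γ) :
    Cond T (truthSet α) (truthSet β) ↔ .cf α.1 β.1 ∈ T := by
  have h : ∀ (ψ : Γ) v, (disjForm Γ (truthSet ψ)).evalB v ↔ ψ.1.evalB v := fun ψ v => by
    simp [truthSet, evalB_disjForm, valOf_apply_eq_true_iff]
  exact ⟨cf_mem_of_cf_mem hT (h α) (fun v => (h β v).1),
    cf_mem_of_cf_mem hT (fun v => (h α v).symm) (fun v => (h β v).2)⟩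

lemma image_closest_eq_select {M : CStruct Φ} (pt : M.World → Point ex Γ)
    (hclosest : ∀ x D, (pt x).1 ∉ D →
      (fun y => (pt y).1) '' M.closest x (fun y => (pt y).1 ∈ D) = select (mcsOf (pt x)) D)
    (x : M.World) (D : Finset (Val Γ)) :
    (fun y => (pt y).1) '' M.closest x (fun y => (pt y).1 ∈ D) = select (mcsOf (pt x)) D := by
  by_cases hx : (pt x).1 ∈ D
  · rw [M.closest_eq_singleton_self x hx, Set.image_singleton,
      select_eq_singleton_of_mem (maxConsistent_mcsOf _) (by rwa [valOf_mcsOf]), valOf_mcsOf,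
      Finset.coe_singleton]
  · exact hclosest x D hx

theorem satC_iff_mem_mcsOf {M : CStruct Φ} (pt : M.World → Point ex Γ)
    (hval : ∀ w p, M.val w p ↔ ∃ h : CForm.atom p ∈ Γ, (pt w).1 ⟨_, h⟩ = true)
    (hclosest : ∀ x D, (pt x).1 ∉ D →
      (fun y => (pt y).1) '' M.closest x (fun y => (pt y).1 ∈ D) = select (mcsOf (pt x)) D)
    {ψ : CForm Φ} (hψ : ψ.subformulas ⊆ Γ) (x : M.World) :
    M.satC x ψ ↔ ψ ∈ mcsOf (pt x) := by
  induction ψ generalizing x with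
  | atom p =>
    have hp : CForm.atom p ∈ Γ := hψ (CForm.mem_subformulas_self _)
    rw [CStruct.satC_atom, hval, mem_mcsOf_iff _ ⟨_, hp⟩]
    exact ⟨fun ⟨_, h⟩ => h, fun h => ⟨hp, h⟩⟩
  | fls => simpa using (maxConsistent_mcsOf (pt x)).fls_notMem
  | neg φ ih =>
    have hφ : φ.subformulas ⊆ Γ := (Finset.subset_insert _ _).trans hψ
    exact (not_congr (ih hφ x)).trans ((maxConsistent_mcsOf _).neg_mem_iff φ).symm
  | and φ χ ih₁ ih₂ =>
    have hφ : φ.subformulas ⊆ Γ :=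
      (Finset.subset_union_left.trans (Finset.subset_insert _ _)).trans hψ
    have hχ : χ.subformulas ⊆ Γ :=
      (Finset.subset_union_right.trans (Finset.subset_insert _ _)).trans hψ
    exact (and_congr (ih₁ hφ x) (ih₂ hχ x)).trans
      ((maxConsistent_mcsOf _).and_mem_iff φ χ).symm
  | cf α β ih₁ ih₂ =>
    have hα : α.subformulas ⊆ Γ :=
      (Finset.subset_union_left.trans (Finset.subset_insert _ _)).trans hψ
    have hβ : β.subformulas ⊆ Γ :=
      (Finset.subset_union_right.trans (Finset.subset_insert _ _)).trans hψ
    let a : Γ := ⟨α, hα (CForm.mem_subformulas_self α)⟩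
    let b : Γ := ⟨β, hβ (CForm.mem_subformulas_self β)⟩
    have htruth : ∀ {χ : CForm Φ} (c : Γ), c.1 = χ →
        (∀ y, M.satC y χ ↔ χ ∈ mcsOf (pt y)) →
        ∀ y, M.satC y χ ↔ (pt y).1 ∈ truthSet c := by
      rintro _ c rfl h y
      simp [h, truthSet, mem_mcsOf_iff]
    have hA : (M.satC · α) = fun y => (pt y).1 ∈ truthSet a :=
      funext fun y => propext (htruth a rfl (ih₁ hα) y)
    rw [← cond_truthSet_iff (maxConsistent_mcsOf _) a b, cond_iff_select_subset
      (maxConsistent_mcsOf _), ← Finset.coe_subset, ← image_closest_eq_select pt hclosest,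
      CStruct.satC_cf, hA, Set.image_subset_iff]
    exact forall₂_congr fun y _ => htruth b rfl (ih₂ hβ) y

def pointVal (w : Point ex Γ) (p : Φ) : Prop := ∃ h : CForm.atom p ∈ Γ, w.1 ⟨_, h⟩ = true

section Total

variable (hA7 : ∀ θ, A7Scheme Φ θ → AXProv Φ ex θ)
include hA7

lemma mem_select_pair_trans {T : Set (CForm Φ)} (hT : MaxConsistent ex T) {a b c : Val Γ}
    (ha : a ∈ select T {a}) (hab : a ≠ b ∧ a ∈ select T {a, b})
    (hbc : b ≠ c ∧ b ∈ select T {b, c}) : a ≠ c ∧ a ∈ select T {a, c} := by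
  refine ⟨?_, ?_⟩
  · rintro rfl
    rw [Finset.pair_comm] at hbc
    exact hab.1 (eq_of_mem_select hT hA7 hab.2 hbc.2)
  obtain ⟨m, hm⟩ := select_nonempty_of_subset hT (B := {a, b, c}) (by simp) ⟨a, ha⟩
  have hsub : ∀ {x y : Val Γ}, x ∈ ({a, b, c} : Finset _) → y ∈ ({a, b, c} : Finset _) →
      ({x, y} : Finset _) ⊆ {a, b, c} := fun hx hy => Finset.insert_subset hx (by simpa using hy)
  rcases Finset.mem_insert.1 (select_subset hT _ hm) with rfl | hm'
  · exact mem_select_of_subset hT (hsub (by simp) (by simp)) hm (by simp)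
  rcases Finset.mem_insert.1 hm' with rfl | hm'
  · exact absurd (eq_of_mem_select hT hA7 hab.2
      (mem_select_of_subset hT (hsub (by simp) (by simp)) hm (by simp))) hab.1
  · rw [Finset.mem_singleton.1 hm'] at hm
    exact absurd (eq_of_mem_select hT hA7 hbc.2
      (mem_select_of_subset hT (hsub (by simp) (by simp)) hm (by simp))) hbc.1

variable (ex Γ) in
/-- A7 makes each selection a singleton or empty, so that choosing from pairs orders the
points. -/
abbrev totalModel : CStruct Φ :=
  CStruct.ofStrictOrders pointVal
    (fun (x a : Point ex Γ) => a ≠ x ∧ a.1 ∈ select (mcsOf x) {a.1})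
    (fun x a b => a ≠ b ∧ a.1 ∈ select (mcsOf x) {a.1, b.1})
    (fun _ h => h.1 rfl)
    (fun x _ _ _ ha _ _ hab hbc => by
      obtain ⟨hne, hac⟩ := mem_select_pair_trans hA7 (maxConsistent_mcsOf x) ha.2
        ⟨Subtype.coe_ne_coe.2 hab.1, hab.2⟩ ⟨Subtype.coe_ne_coe.2 hbc.1, hbc.2⟩
      exact ⟨Subtype.coe_ne_coe.1 hne, hac⟩)

lemma totalModel_totalOrd : (totalModel ex Γ hA7).totalOrd := by
  refine CStruct.totalOrd_ofStrictOrders (fun _ _ h => h.1 rfl) fun x a b ha _ hab => ?_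
  have hT := maxConsistent_mcsOf x
  obtain ⟨m, hm⟩ := select_nonempty_of_subset hT (B := {a.1, b.1}) (by simp) ⟨a.1, ha.2⟩
  rcases Finset.mem_insert.1 (select_subset hT _ hm) with h | h
  · exact .inl ⟨hab, h ▸ hm⟩
  · rw [Finset.mem_singleton.1 h, Finset.pair_comm] at hm
    exact .inr ⟨hab.symm, hm⟩

lemma image_closest_totalModel (x : Point ex Γ) (D : Finset (Val Γ)) (hx : x.1 ∉ D) :
    Subtype.val '' (totalModel ex Γ hA7).closest x (fun y => y.1 ∈ D) = select (mcsOf x) D := by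
  have hT := maxConsistent_mcsOf x
  unfold totalModel
  rw [CStruct.closest_ofStrictOrders (x := x) (A := fun y => y.1 ∈ D) (fun _ _ h => h.1 rfl) hx]
  ext g
  simp only [Set.mem_image, Set.mem_ofPred_eq, Finset.mem_coe]
  constructor
  · rintro ⟨y, ⟨⟨hyx, hy⟩, hyD, hmin⟩, rfl⟩
    by_contra hyD'
    obtain ⟨m, hm⟩ :=
      select_nonempty_of_subset hT (Finset.singleton_subset_iff.2 hyD) ⟨_, hy⟩
    have hmD := select_subset hT D hm
    refine hmin (pointOfMemSelect hm) ⟨fun h => hx (h ▸ hmD),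
        mem_select_of_subset hT (by simpa using hmD) hm (by simp)⟩ hmD
      ⟨fun h => hyD' (h ▸ hm), mem_select_of_subset hT ?_ hm (by simp)⟩
    exact Finset.insert_subset hmD (by simpa using hyD)
  · intro hg
    have hgD := select_subset hT D hg
    refine ⟨pointOfMemSelect hg, ⟨⟨fun h => hx (h ▸ hgD),
      mem_select_of_subset hT (by simpa using hgD) hg (by simp)⟩, hgD,
      fun y' _ hy'D hr => hr.1 (Subtype.ext ?_)⟩, rfl⟩
    exact eq_of_mem_select hT hA7 hr.2 (mem_select_of_subset hT
      (Finset.insert_subset hy'D (by simpa using hgD)) hg (by simp))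

theorem exists_totalOrd_not_satC {φ : CForm Φ} (h : ¬ AXProv Φ ex φ) :
    ∃ M : CStruct Φ, M.totalOrd ∧ ∃ w : M.World, ¬ M.satC w φ := by
  obtain ⟨p, hp⟩ :=
    exists_point_notMem (Γ := φ.subformulas) h (CForm.mem_subformulas_self φ)
  refine ⟨totalModel ex _ hA7, totalModel_totalOrd hA7, p, fun hφ => hp ?_⟩
  exact (satC_iff_mem_mcsOf (M := totalModel ex _ hA7) id (fun _ _ => .rfl)
    (image_closest_totalModel hA7) le_rfl p).1 hφ

end Total

section Preorder

variable (ex Γ) in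
/-- Besides the points, the states `(G, g)`: a world for `g` as a closest
`disjForm G`-world. -/
abbrev StateWorld : Type := Point ex Γ ⊕ (Finset (Val Γ) × Point ex Γ)

@[simp] def statePoint : StateWorld ex Γ → Point ex Γ
  | .inl p => p
  | .inr σ => σ.2

def IsState (x : StateWorld ex Γ) : StateWorld ex Γ → Prop
  | .inl _ => False
  | .inr σ => .inr σ ≠ x ∧ σ.2.1 ∈ select (mcsOf (statePoint x)) σ.1

def stateLt : StateWorld ex Γ → StateWorld ex Γ → Prop
  | .inr σ, .inr τ => τ.1 ⊂ σ.1 ∧ σ.2.1 ∉ τ.1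
  | _, _ => False

lemma stateLt_irrefl : ∀ a : StateWorld ex Γ, ¬ stateLt a a
  | .inl _ => id
  | .inr _ => fun h => (ssubset_irrefl _) h.1

lemma stateLt_trans : ∀ {a b c : StateWorld ex Γ}, stateLt a b → stateLt b c → stateLt a c
  | .inr _, .inr _, .inr _, ⟨h₁, h₂⟩, ⟨h₃, _⟩ =>
    ⟨h₃.trans h₁, fun h => h₂ (h₃.subset h)⟩

lemma not_isState_self : ∀ x : StateWorld ex Γ, ¬ IsState x x
  | .inl _ => id
  | .inr _ => fun h => h.1 rfl

variable (ex Γ) in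
abbrev preorderModel : CStruct Φ :=
  CStruct.ofStrictOrders (α := StateWorld ex Γ) (pointVal ∘ statePoint) IsState
    (fun _ => stateLt)
    not_isState_self (fun _ _ _ _ _ _ _ => stateLt_trans)

lemma image_closest_preorderModel (x : StateWorld ex Γ) (D : Finset (Val Γ))
    (hx : (statePoint x).1 ∉ D) :
    (fun y => (statePoint y).1) ''
        (preorderModel ex Γ).closest x (fun y => (statePoint y).1 ∈ D) =
      select (mcsOf (statePoint x)) D := by
  have hT := maxConsistent_mcsOf (statePoint x)
  unfold preorderModel
  rw [CStruct.closest_ofStrictOrders (x := x) (A := fun y => (statePoint y).1 ∈ D)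
    (fun _ => stateLt_irrefl) hx]
  ext g
  simp only [Set.mem_image, Set.mem_ofPred_eq, Finset.mem_coe]
  constructor
  · rintro ⟨_ | ⟨G, p⟩, ⟨hy, hyD, hmin⟩, rfl⟩
    · exact hy.elim
    by_contra hp
    obtain ⟨g', hg', hg'G⟩ := exists_mem_select_union_notMem hT hy.2 hyD hp
    have hg'D : g' ∈ D := (Finset.mem_union.1 (select_subset hT _ hg')).resolve_left hg'G
    refine hmin (.inr (G ∪ D, pointOfMemSelect hg')) ⟨fun h => hx ?_, hg'⟩ hg'D
      ⟨(Finset.ssubset_iff_of_subset Finset.subset_union_left).2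
        ⟨g', select_subset hT _ hg', hg'G⟩, hg'G⟩
    have hxg' : (statePoint x).1 = g' := by rw [← h]; rfl
    exact hxg' ▸ hg'D
  · intro hg
    have hgD := select_subset hT D hg
    refine ⟨.inr (D, pointOfMemSelect hg), ⟨⟨fun h => hx ?_, hg⟩, hgD, ?_⟩, rfl⟩
    · have hxg : (statePoint x).1 = g := by rw [← h]; rfl
      exact hxg ▸ hgD
    · rintro (_ | _) hy' hy'D hlt
      exacts [hy'.elim, hlt.2 hy'D]

theorem exists_not_satC {φ : CForm Φ} (h : ¬ AXProv Φ ex φ) :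
    ∃ (M : CStruct Φ) (w : M.World), ¬ M.satC w φ := by
  obtain ⟨p, hp⟩ :=
    exists_point_notMem (Γ := φ.subformulas) h (CForm.mem_subformulas_self φ)
  refine ⟨preorderModel ex _, .inl p, fun hφ => hp ?_⟩
  exact (satC_iff_mem_mcsOf (M := preorderModel ex _) statePoint (fun _ _ => .rfl)
    image_closest_preorderModel le_rfl (.inl p)).1 hφ

end Preorder

end Canonical

end

theorem stmt19_general (Φ : Type) :
    (∀ φ : CForm Φ,
      AXProv Φ (fun _ => False) φ ↔ ∀ (M : CStruct Φ) (w : M.World), M.satC w φ) ∧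
    (∀ φ : CForm Φ,
      AXProv Φ (A7Scheme Φ) φ ↔
        ∀ M : CStruct Φ, M.totalOrd → ∀ w : M.World, M.satC w φ) := by
  refine ⟨fun φ => ⟨fun h M w => ?_, fun h => ?_⟩,
    fun φ => ⟨fun h => ?_, fun h => ?_⟩⟩
  · exact AXProv.sound (C := fun _ => True) (fun _ _ _ _ => False.elim) h M trivial w
  · by_contra hφ
    obtain ⟨M, w, hw⟩ := Canonical.exists_not_satC hφ
    exact hw (h M w)
  · exact AXProv.sound
      (fun M hM w θ ⟨φ, ψ₁, ψ₂, hθ⟩ => hθ ▸ CStruct.satC_A7 hM w φ ψ₁ ψ₂) h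
  · by_contra hφ
    obtain ⟨M, hM, w, hw⟩ := Canonical.exists_totalOrd_not_satC (fun _ => .ax) hφ
    exact hw (h M hM w)

/-- For every finite set `Φ` of primitive propositions, (i) AX is
sound and complete for `L^C(Φ)` with respect to the class `M(Φ)` of all
counterfactual structures over `Φ`, and (ii) AX⁺ (AX together with A7) is sound
and complete for `L^C(Φ)` with respect to the class `M⁺(Φ)` of structures in
which each `≺_w` is a strict total order on `W_w`. -/
theorem stmt19 (Φ : Type) (hΦ : Fintype Φ) :
    (∀ φ : CForm Φ,
      AXProv Φ (fun _ => False) φ ↔ ∀ (M : CStruct Φ) (w : M.World), M.satC w φ) ∧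
    (∀ φ : CForm Φ,
      AXProv Φ (A7Scheme Φ) φ ↔
        ∀ M : CStruct Φ, M.totalOrd → ∀ w : M.World, M.satC w φ) :=
  stmt19_general Φ
end
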